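/- In the chain MDP of Figure 2, with optimal policy π* (which goes left from s₀ then down to s̃), the 0-1 loss satisfies g(π_left) = 1/T and g(π_right) = 1 − 1/T, while the Q-based loss satisfies ℓ(π_left) = 1 and ℓ(π_right) = α/T. In particular, π_right has strictly higher cumulative reward than π_left even though it has strictly higher 0-1 loss. -/

import Mathlib

/-- States of the chain MDP of Figure 2: `s i` for `i ∈ {-k,…,k}` (represented by `i : ℤ`),
the high-reward state `s̃` (`tilde`), and the absorbing terminal state `s_end` (`halt`). -/
inductive ChainSt where
  | s : ℤ → ChainSt
  | tilde : ChainSt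
  | halt : ChainSt
deriving DecidableEq

inductive ChainAct where
  | left | right | down
deriving DecidableEq

/-- Deterministic transitions of the chain MDP with parameter `k`: from `s i` with
`-(k-1) ≤ i ≤ k-1`, `left` goes to `s (i-1)` and `right` to `s (i+1)`; `down` from `s (-(k-1))`
goes to `s̃`; `left` from `s (-k)`, `right` from `s k`, and `left` from `s̃` go to `s_end`;
all unavailable actions go to `s_end`, and `s_end` is absorbing. -/
def chainStep (k : ℕ) : ChainSt → ChainAct → ChainSt
  | .s i, .left => if i = -(k : ℤ) then .halt else if i = (k : ℤ) then .halt else .s (i - 1)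
  | .s i, .right => if i = (k : ℤ) then .halt else if i = -(k : ℤ) then .halt else .s (i + 1)
  | .s i, .down => if i = -((k : ℤ) - 1) then .tilde else .halt
  | .tilde, _ => .halt
  | .halt, _ => .halt

/-- Rewards: `R(s̃) = T`, `R(s k) = T − α`, and `0` otherwise. -/
noncomputable def chainR (k : ℕ) (T : ℕ) (α : ℝ) : ChainSt → ℝ
  | .tilde => (T : ℝ)
  | .s i => if i = (k : ℤ) then (T : ℝ) - α else 0
  | .halt => 0

/-- The (deterministic) trajectory of policy `π` from state `st` after `t` steps. -/
def chainTraj (k : ℕ) (π : ChainSt → ChainAct) (st : ChainSt) (t : ℕ) : ChainSt :=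
  (fun s => chainStep k s (π s))^[t] st

/-- Cumulative reward of policy `π` from the initial state `s 0` over horizon `T`,
so that `J(π) = -(chainJaux ...)`. -/
noncomputable def chainReturn (k : ℕ) (T : ℕ) (α : ℝ) (π : ChainSt → ChainAct) : ℝ :=
  ∑ t ∈ Finset.range T, chainR k T α (chainTraj k π (.s 0) t)

/-- The optimal policy `π*` of the chain MDP: `down` at `s (-(k-1))`, `right` at `s k`,
and `left` otherwise. -/
def chainPiStar (k : ℕ) : ChainSt → ChainAct
  | .s i => if i = -((k : ℤ) - 1) then .down else if i = (k : ℤ) then .right else .left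
  | _ => .left

/-- The average 0-1 disagreement of `π` with `π*` along the trajectory of `π` from `s 0`:
`g(π) = E_{s ∼ d^{(π)}}[𝟙[π(s) ≠ π*(s)]]` (the MDP is deterministic, so `d_t^{(π)}` is a point
mass on the trajectory). -/
noncomputable def chainG (k : ℕ) (T : ℕ) (π : ChainSt → ChainAct) : ℝ :=
  (T : ℝ)⁻¹ * ∑ t ∈ Finset.range T,
    (if π (chainTraj k π (.s 0) t) = chainPiStar k (chainTraj k π (.s 0) t) then (0 : ℝ) else 1)

/-- The Q-based loss `ℓ(π) = T⁻¹(J(π) − J(π*))`, with `J(π)` the negative cumulative reward. -/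
noncomputable def chainL (k : ℕ) (T : ℕ) (α : ℝ) (π : ChainSt → ChainAct) : ℝ :=
  (T : ℝ)⁻¹ * ((-(chainReturn k T α π)) - (-(chainReturn k T α (chainPiStar k))))

/-! `π_left` and `π_right` walk to an end of the chain and then fall into the absorbing `s_end`,
while `π*` turns down to `s̃` one step before reaching `s_{-k}`. So each return is a single reward
(`0`, `T - α`, `T`), and `π_left` disagrees with `π*` only at `s_{-(k-1)}`, whereas `π_right`
agrees with it only at `s_k`. -/

section Trajectories

variable {k : ℕ}

lemma chainTraj_succ (π : ChainSt → ChainAct) (st : ChainSt) (t : ℕ) :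
    chainTraj k π st (t + 1) = chainStep k (chainTraj k π st t) (π (chainTraj k π st t)) :=
  Function.iterate_succ_apply' _ _ _

lemma chainTraj_left (t : ℕ) :
    chainTraj k (fun _ => .left) (.s 0) t = if t ≤ k then .s (-t) else .halt := by
  induction t with
  | zero => rfl
  | succ t ih =>
    rw [chainTraj_succ, ih]
    grind [chainStep]

lemma chainTraj_right (t : ℕ) :
    chainTraj k (fun _ => .right) (.s 0) t = if t ≤ k then .s t else .halt := by
  induction t with
  | zero => rfl
  | succ t ih =>
    rw [chainTraj_succ, ih]
    grind [chainStep]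

lemma chainTraj_piStar (hk : 1 ≤ k) (t : ℕ) :
    chainTraj k (chainPiStar k) (.s 0) t =
      if t < k then .s (-t) else if t = k then .tilde else .halt := by
  induction t with
  | zero => simp [chainTraj, Nat.one_le_iff_ne_zero.mp hk]
  | succ t ih =>
    rw [chainTraj_succ, ih]
    grind [chainStep, chainPiStar]

end Trajectories

section Rewards

variable {k T : ℕ} {α : ℝ}

lemma chainR_chainTraj_left (hk : 1 ≤ k) (t : ℕ) :
    chainR k T α (chainTraj k (fun _ => .left) (.s 0) t) = 0 := by
  rw [chainTraj_left]
  grind [chainR]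

lemma chainR_chainTraj_right (t : ℕ) :
    chainR k T α (chainTraj k (fun _ => .right) (.s 0) t) = if t = k then (T : ℝ) - α else 0 := by
  rw [chainTraj_right]
  grind [chainR]

lemma chainR_chainTraj_piStar (hk : 1 ≤ k) (t : ℕ) :
    chainR k T α (chainTraj k (chainPiStar k) (.s 0) t) = if t = k then (T : ℝ) else 0 := by
  rw [chainTraj_piStar hk]
  grind [chainR]

lemma chainReturn_left (hk : 1 ≤ k) : chainReturn k T α (fun _ => .left) = 0 :=
  Finset.sum_eq_zero fun t _ => chainR_chainTraj_left hk t

lemma chainReturn_right (hkT : k < T) : chainReturn k T α (fun _ => .right) = T - α := by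
  simp [chainReturn, chainR_chainTraj_right, hkT]

lemma chainReturn_piStar (hk : 1 ≤ k) (hkT : k < T) : chainReturn k T α (chainPiStar k) = T := by
  simp [chainReturn, chainR_chainTraj_piStar hk, hkT]

end Rewards

section ZeroOneLoss

variable {k T : ℕ}

lemma chainPiStar_chainTraj_left_eq_left_iff (t : ℕ) :
    chainPiStar k (chainTraj k (fun _ => .left) (.s 0) t) = .left ↔ t ≠ k - 1 := by
  rw [chainTraj_left]
  grind [chainPiStar]

lemma chainPiStar_chainTraj_right_eq_right_iff (t : ℕ) :
    chainPiStar k (chainTraj k (fun _ => .right) (.s 0) t) = .right ↔ t = k := by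
  rw [chainTraj_right]
  grind [chainPiStar]

lemma chainG_left (hkT : k < T) : chainG k T (fun _ => .left) = 1 / T := by
  simp [chainG, eq_comm (a := ChainAct.left), chainPiStar_chainTraj_left_eq_left_iff,
    show k - 1 < T by omega]

lemma chainG_right (hkT : k < T) : chainG k T (fun _ => .right) = 1 - 1 / T := by
  have hT : (T : ℝ) ≠ 0 := Nat.cast_ne_zero.mpr (by omega)
  have hcount : ∑ t ∈ Finset.range T, (if t = k then (0 : ℝ) else 1) = T - 1 := by
    simp [Finset.sum_ite, Finset.filter_ne', hkT, Nat.cast_sub (by omega : 1 ≤ T)]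
  simp only [chainG, eq_comm (a := ChainAct.right), chainPiStar_chainTraj_right_eq_right_iff,
    hcount]
  field_simp

end ZeroOneLoss

/-- Theorem 2: `g(π_left) = 1/T`, `g(π_right) = 1 − 1/T`, `ℓ(π_left) = 1`,
`ℓ(π_right) = α/T`; in particular `π_right` has strictly higher cumulative reward than `π_left`
even though it has strictly higher 0-1 loss. -/
theorem chain_zero_one_loss_vs_q_loss (k : ℕ) (hk : 1 ≤ k) (α : ℝ) (hα : 0 < α ∧ α < 1)
    (T : ℕ) (hT : T = 3 * (k + 1)) :
    chainG k T (fun _ => ChainAct.left) = 1 / (T : ℝ) ∧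
    chainG k T (fun _ => ChainAct.right) = 1 - 1 / (T : ℝ) ∧
    chainL k T α (fun _ => ChainAct.left) = 1 ∧
    chainL k T α (fun _ => ChainAct.right) = α / (T : ℝ) ∧
    chainReturn k T α (fun _ => ChainAct.left) < chainReturn k T α (fun _ => ChainAct.right) ∧
    chainG k T (fun _ => ChainAct.left) < chainG k T (fun _ => ChainAct.right) := by
  have hkT : k < T := by omega
  have hT6 : (6 : ℝ) ≤ T := by exact_mod_cast (by omega : 6 ≤ T)
  have hT0 : (T : ℝ) ≠ 0 := by positivity
  refine ⟨chainG_left hkT, chainG_right hkT, ?_, ?_, ?_, ?_⟩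
  · rw [chainL, chainReturn_left hk, chainReturn_piStar hk hkT]
    field_simp
    ring
  · rw [chainL, chainReturn_right hkT, chainReturn_piStar hk hkT]
    field_simp
    ring
  · rw [chainReturn_left hk, chainReturn_right hkT]
    linarith [hα.2]
  · rw [chainG_left hkT, chainG_right hkT, lt_sub_iff_add_lt, ← add_div, div_lt_one (by positivity)]
    linarith
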